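/- arXiv:1101.0683 — 2 statements merged into one kernel-verified Lean document; each statement's English description precedes it below -/
import Mathlib

section
/- Let L/k be a finite Galois extension with group G. Every finite-dimensional L-vector space V endowed with a semilinear G-action is G-equivariantly isomorphic to L ⊗_k (V^G); in particular V admits an L-basis of G-invariant vectors. -/
/-!
The natural map `L ⊗[k] V^G → V`, `l ⊗ w ↦ l • w`, is an isomorphism. It is injective because
a `k`-independent family of invariant vectors stays `L`-independent: applying `∑ g, g • (x • ·)`
to an `L`-relation `∑ cᵢ • wᵢ = 0` gives the `k`-relation `∑ Tr(x cᵢ) • wᵢ = 0`, and the trace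
form of a separable extension is nondegenerate. It is surjective because an `L`-linear form `f`
vanishing on `V^G` kills every average `∑ g, g • (x • v)`, i.e. `∑ g, f (g • v) * g x = 0` for
all `x`, so Dedekind's independence of characters forces `f (g • v) = 0`, in particular `f v = 0`.
-/

open TensorProduct

open MulAction (fixedPoints)

theorem sum_smul_mem_fixedPoints {G M : Type*} [Group G] [Fintype G] [AddCommMonoid M]
    [DistribMulAction G M] (x : M) : ∑ g : G, g • x ∈ fixedPoints G M := fun h => by
  simp only [Finset.smul_sum, smul_smul]
  exact Fintype.sum_equiv (Equiv.mulLeft h) _ _ fun _ => rfl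

theorem linearIndependent_algEquiv_coeFn (k L : Type*) [Field k] [Field L] [Algebra k L] :
    LinearIndependent L (fun g : L ≃ₐ[k] L => (g : L → L)) :=
  (linearIndependent_monoidHom L L).comp (fun g : L ≃ₐ[k] L => (g : L →* L))
    fun _ _ h => AlgEquiv.ext fun x => congrArg (fun f : L →* L => f x) h

section SemilinearAction

variable {k L V : Type*} [Field k] [Field L] [Algebra k L] [AddCommGroup V] [Module L V]
  [Module k V] [IsScalarTower k L V]
  [DistribMulAction (L ≃ₐ[k] L) V] [SMulDistribClass (L ≃ₐ[k] L) L V]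

variable (k L V) in
def fixedSubmodule : Submodule k V where
  carrier := fixedPoints (L ≃ₐ[k] L) V
  add_mem' hv hw g := by rw [smul_add, hv g, hw g]
  zero_mem' := smul_zero
  smul_mem' c v hv g := by
    rw [← algebraMap_smul L c v, smul_distrib_smul, hv g, AlgEquiv.smul_def, AlgEquiv.commutes]

variable [FiniteDimensional k L]

theorem span_fixedSubmodule_eq_top :
    Submodule.span L (fixedSubmodule k L V : Set V) = ⊤ := by
  by_contra hne
  obtain ⟨f, hf, hle⟩ := Submodule.exists_le_ker_of_lt_top _ (lt_top_iff_ne_top.2 hne)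
  refine hf (LinearMap.ext fun v => ?_)
  have hchar (x : L) : ∑ g : L ≃ₐ[k] L, f (g • v) * g x = 0 := by
    have := hle (Submodule.subset_span (sum_smul_mem_fixedPoints (x • v)))
    simpa [smul_distrib_smul, mul_comm] using this
  simpa using Fintype.linearIndependent_iff.mp (linearIndependent_algEquiv_coeFn k L)
    (fun g => f (g • v)) (funext fun x => by simpa using hchar x) 1

variable [IsGalois k L]

theorem sum_smul_smul_eq_trace_smul {v : V} (hv : ∀ g : L ≃ₐ[k] L, g • v = v) (c : L) :
    ∑ g : L ≃ₐ[k] L, g • (c • v) = Algebra.trace k L c • v := by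
  simp_rw [smul_distrib_smul, hv, AlgEquiv.smul_def, ← Finset.sum_smul,
    ← trace_eq_sum_automorphisms, algebraMap_smul]

theorem linearIndependent_of_fixed {ι : Type*} {w : ι → V}
    (hw : ∀ (g : L ≃ₐ[k] L) i, g • w i = w i) (hk : LinearIndependent k w) :
    LinearIndependent L w := by
  rw [linearIndependent_iff'] at hk ⊢
  intro s c hc i hi
  have htrace (x : L) : ∑ j ∈ s, Algebra.trace k L (x * c j) • w j = 0 :=
    calc _ = ∑ j ∈ s, ∑ g : L ≃ₐ[k] L, g • ((x * c j) • w j) :=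
            Finset.sum_congr rfl fun j _ => (sum_smul_smul_eq_trace_smul (hw · j) _).symm
      _ = ∑ g : L ≃ₐ[k] L, g • ∑ j ∈ s, (x * c j) • w j := by
            simp_rw [Finset.smul_sum]
            exact Finset.sum_comm
      _ = 0 := by simp_rw [mul_smul, ← Finset.smul_sum, hc, smul_zero, Finset.sum_const_zero]
  exact (traceForm_nondegenerate k L).1 (c i) fun x => by
    simpa [mul_comm] using hk s _ (htrace x) i hi

noncomputable def fixedBasis {ι : Type*} (b : Module.Basis ι k (fixedSubmodule k L V)) :
    Module.Basis ι L V :=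
  .mk (linearIndependent_of_fixed (fun g i => (b i).2 g)
      (b.linearIndependent.map' _ (Submodule.ker_subtype _))) <| by
    rw [← span_fixedSubmodule_eq_top (k := k), Submodule.span_le]
    intro v hv
    refine Submodule.span_le_restrictScalars k L _ ?_
    have := Submodule.apply_mem_span_image_of_mem_span (fixedSubmodule k L V).subtype
      (b.mem_span ⟨v, hv⟩)
    rwa [← Set.range_comp] at this

@[simp]
theorem fixedBasis_apply {ι : Type*} (b : Module.Basis ι k (fixedSubmodule k L V)) (i : ι) :
    fixedBasis b i = b i :=
  Module.Basis.mk_apply _ _ _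

variable (k L V) in
noncomputable def fixedBaseChangeEquiv : L ⊗[k] fixedSubmodule k L V ≃ₗ[L] V :=
  let b := Module.Free.chooseBasis k (fixedSubmodule k L V)
  (Algebra.TensorProduct.basis L b).equiv (fixedBasis b) (Equiv.refl _)

theorem fixedBaseChangeEquiv_toLinearMap :
    (fixedBaseChangeEquiv k L V : L ⊗[k] fixedSubmodule k L V →ₗ[L] V) =
      (fixedSubmodule k L V).subtype.liftBaseChange L :=
  (Algebra.TensorProduct.basis L (Module.Free.chooseBasis k _)).ext fun i => by
    simp only [fixedBaseChangeEquiv, LinearEquiv.coe_coe, Module.Basis.equiv_apply]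
    simp

@[simp]
theorem fixedBaseChangeEquiv_tmul (l : L) (w : fixedSubmodule k L V) :
    fixedBaseChangeEquiv k L V (l ⊗ₜ w) = l • (w : V) := by
  simpa using LinearMap.congr_fun fixedBaseChangeEquiv_toLinearMap (l ⊗ₜ[k] w)

end SemilinearAction

/-- Galois descent for vector spaces: for a finite Galois extension L/k with
group G, every finite-dimensional L-vector space V with a semilinear G-action
is G-equivariantly isomorphic to L ⊗_k V^G; in particular V admits an L-basis
of G-invariant vectors. -/
theorem galois_descent_vector_spaces
    (k L V : Type) [Field k] [Field L] [Algebra k L]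
    [FiniteDimensional k L] [IsGalois k L]
    [AddCommGroup V] [Module k V] [Module L V] [IsScalarTower k L V]
    [FiniteDimensional L V]
    (ρ : (L ≃ₐ[k] L) →* Multiplicative (AddAut V))
    (hsemi : ∀ (g : L ≃ₐ[k] L) (lam : L) (v : V), (ρ g).toAdd (lam • v) = g lam • (ρ g).toAdd v)
    (VG : Submodule k V)
    (hVG : ∀ v : V, v ∈ VG ↔ ∀ g : L ≃ₐ[k] L, (ρ g).toAdd v = v) :
    (∃ e : (L ⊗[k] VG) ≃ₗ[L] V,
        ∀ (g : L ≃ₐ[k] L) (l : L) (w : VG),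
          e (g l ⊗ₜ[k] w) = (ρ g).toAdd (e (l ⊗ₜ[k] w))) ∧
    (∃ b : Module.Basis (Fin (Module.finrank L V)) L V,
        ∀ (i : Fin (Module.finrank L V)) (g : L ≃ₐ[k] L), (ρ g).toAdd (b i) = b i) := by
  let : DistribMulAction (L ≃ₐ[k] L) V :=
    { smul g v := (ρ g).toAdd v
      one_smul v := by
        change (ρ 1).toAdd v = v
        rw [map_one]
        rfl
      mul_smul g h v := by
        change (ρ (g * h)).toAdd v = (ρ g).toAdd ((ρ h).toAdd v)
        rw [map_mul]
        rfl
      smul_zero g := map_zero _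
      smul_add g := map_add _ }
  have : SMulDistribClass (L ≃ₐ[k] L) L V := ⟨hsemi⟩
  obtain rfl : VG = fixedSubmodule k L V := Submodule.ext hVG
  have : FiniteDimensional k V := Module.Finite.trans L V
  have hrank : Module.finrank k (fixedSubmodule k L V) = Module.finrank L V :=
    Module.finrank_baseChange.symm.trans (fixedBaseChangeEquiv k L V).finrank_eq
  refine ⟨⟨fixedBaseChangeEquiv k L V, fun g l w => ?_⟩,
    ⟨fixedBasis (Module.finBasisOfFinrankEq k _ hrank), fun i g => ?_⟩⟩
  · change _ = g • fixedBaseChangeEquiv k L V (l ⊗ₜ[k] w)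
    rw [fixedBaseChangeEquiv_tmul, fixedBaseChangeEquiv_tmul, smul_distrib_smul, w.2 g]
    rfl
  · rw [fixedBasis_apply]
    exact (Module.finBasisOfFinrankEq k _ hrank i).2 g
end

section
/- There exist no rational functions U, V ∈ C(S,T) satisfying S·U² + T·V² = 1. -/
/-!
Clearing denominators, a solution would give polynomials with `S a² + T b² = c²` and `c ≠ 0`.
View them as polynomials in `S` over `ℂ[T]` and set `S = 0`: then `T b(0)² = c(0)²`, which forces
`b(0) = c(0) = 0` because the two sides have degrees of different parity in `T`. Hence `S ∣ b, c`,
then `S ∣ a`, and dividing by `S` gives a new solution; so every power of `S` divides `c`.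
-/

open Polynomial

namespace MvPolynomial

variable {R σ : Type*} [CommSemiring R] [NoZeroDivisors R]

theorem totalDegree_sq_of_isDomain {p : MvPolynomial σ R} (hp : p ≠ 0) :
    (p ^ 2).totalDegree = 2 * p.totalDegree := by
  rw [sq, totalDegree_mul_of_isDomain hp hp, two_mul]

theorem eq_zero_of_X_mul_sq_eq_sq [Nontrivial R] {i : σ} {a c : MvPolynomial σ R}
    (h : X i * a ^ 2 = c ^ 2) : a = 0 ∧ c = 0 := by
  by_cases ha : a = 0
  · subst ha
    exact ⟨rfl, pow_eq_zero_iff two_ne_zero |>.mp (by simpa using h.symm)⟩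
  have hc : c ≠ 0 := by
    rintro rfl
    simp [X_ne_zero, ha] at h
  have := congrArg totalDegree h
  rw [totalDegree_mul_of_isDomain (X_ne_zero i) (pow_ne_zero 2 ha), totalDegree_X,
    totalDegree_sq_of_isDomain ha, totalDegree_sq_of_isDomain hc] at this
  omega

end MvPolynomial

namespace Polynomial

variable {R : Type*} [CommRing R]

theorem X_dvd_of_eval_zero {p : R[X]} (h : p.eval 0 = 0) : X ∣ p :=
  X_dvd_iff.mpr (by rwa [coeff_zero_eq_eval_zero])

theorem eq_zero_of_forall_X_pow_dvd {p : R[X]} (h : ∀ n, X ^ n ∣ p) : p = 0 := by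
  ext d
  exact X_pow_dvd_iff.mp (h (d + 1)) d d.lt_succ_self

theorem exists_X_mul_of_X_mul_sq_add_C_mul_sq_eq_sq {t : R}
    (ht : ∀ a c : R, t * a ^ 2 = c ^ 2 → a = 0 ∧ c = 0) {a b c : R[X]}
    (h : X * a ^ 2 + C t * b ^ 2 = c ^ 2) :
    ∃ a' b' c', a = X * a' ∧ b = X * b' ∧ c = X * c' ∧
      X * a' ^ 2 + C t * b' ^ 2 = c' ^ 2 := by
  obtain ⟨hb, hc⟩ : b.eval 0 = 0 ∧ c.eval 0 = 0 :=
    ht _ _ (by simpa using congrArg (eval 0) h)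
  obtain ⟨b', rfl⟩ := X_dvd_of_eval_zero hb
  obtain ⟨c', rfl⟩ := X_dvd_of_eval_zero hc
  have h₁ : a ^ 2 + X * (C t * b' ^ 2) = X * c' ^ 2 :=
    isRegular_X.left (by linear_combination h)
  -- `ht` with `a = 0` says that `R` is reduced
  obtain ⟨-, ha⟩ : (0 : R) = 0 ∧ a.eval 0 = 0 :=
    ht _ _ (by simpa using (congrArg (eval 0) h₁).symm)
  obtain ⟨a', rfl⟩ := X_dvd_of_eval_zero ha
  exact ⟨a', b', c', rfl, rfl, rfl, isRegular_X.left (by linear_combination h₁)⟩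

theorem X_pow_dvd_of_X_mul_sq_add_C_mul_sq_eq_sq {t : R}
    (ht : ∀ a c : R, t * a ^ 2 = c ^ 2 → a = 0 ∧ c = 0) (n : ℕ) {a b c : R[X]}
    (h : X * a ^ 2 + C t * b ^ 2 = c ^ 2) : X ^ n ∣ a ∧ X ^ n ∣ b ∧ X ^ n ∣ c := by
  induction n generalizing a b c with
  | zero => simp
  | succ n ih =>
    obtain ⟨a', b', c', rfl, rfl, rfl, h'⟩ := exists_X_mul_of_X_mul_sq_add_C_mul_sq_eq_sq ht h
    obtain ⟨ha, hb, hc⟩ := ih h'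
    rw [pow_succ']
    exact ⟨mul_dvd_mul_left X ha, mul_dvd_mul_left X hb, mul_dvd_mul_left X hc⟩

theorem eq_zero_of_X_mul_sq_add_C_mul_sq_eq_sq {t : R}
    (ht : ∀ a c : R, t * a ^ 2 = c ^ 2 → a = 0 ∧ c = 0) {a b c : R[X]}
    (h : X * a ^ 2 + C t * b ^ 2 = c ^ 2) : a = 0 ∧ b = 0 ∧ c = 0 :=
  ⟨eq_zero_of_forall_X_pow_dvd fun n => (X_pow_dvd_of_X_mul_sq_add_C_mul_sq_eq_sq ht n h).1,
    eq_zero_of_forall_X_pow_dvd fun n => (X_pow_dvd_of_X_mul_sq_add_C_mul_sq_eq_sq ht n h).2.1,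
    eq_zero_of_forall_X_pow_dvd fun n => (X_pow_dvd_of_X_mul_sq_add_C_mul_sq_eq_sq ht n h).2.2⟩

end Polynomial

theorem IsFractionRing.exists_mul_sq_add_mul_sq_eq_sq {A K : Type*} [CommRing A] [CommRing K]
    [Algebra A K] [IsFractionRing A K] {x y : A} {U V : K}
    (h : algebraMap A K x * U ^ 2 + algebraMap A K y * V ^ 2 = 1) :
    ∃ a b, ∃ c ∈ nonZeroDivisors A, x * a ^ 2 + y * b ^ 2 = c ^ 2 := by
  obtain ⟨⟨c, hc⟩, hcUV⟩ :=
    IsLocalization.exist_integer_multiples_of_finite (nonZeroDivisors A) ![U, V]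
  obtain ⟨a, ha⟩ := hcUV 0
  obtain ⟨b, hb⟩ := hcUV 1
  refine ⟨a, b, c, hc, IsFractionRing.injective A K ?_⟩
  simp only [Matrix.cons_val_zero, Matrix.cons_val_one, Algebra.smul_def] at ha hb
  simp only [map_add, map_mul, map_pow, ha, hb]
  linear_combination algebraMap A K c ^ 2 * h

/-- There are no rational functions U, V ∈ ℂ(S,T) with S·U² + T·V² = 1. -/
theorem no_solution_in_rational_functions :
    ¬ ∃ U V : FractionRing (MvPolynomial (Fin 2) ℂ),
      (algebraMap (MvPolynomial (Fin 2) ℂ) (FractionRing (MvPolynomial (Fin 2) ℂ))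
          (MvPolynomial.X 0)) * U ^ 2 +
      (algebraMap (MvPolynomial (Fin 2) ℂ) (FractionRing (MvPolynomial (Fin 2) ℂ))
          (MvPolynomial.X 1)) * V ^ 2 = 1 := by
  rintro ⟨U, V, h⟩
  obtain ⟨a, b, c, hc, habc⟩ := IsFractionRing.exists_mul_sq_add_mul_sq_eq_sq h
  let e := MvPolynomial.finSuccEquiv ℂ 1
  have he : X * e a ^ 2 + C (MvPolynomial.X 0) * e b ^ 2 = e c ^ 2 := by
    simpa [e, MvPolynomial.finSuccEquiv_X_zero, ← MvPolynomial.finSuccEquiv_X_succ] using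
      congrArg e habc
  have hc₀ : e c = 0 :=
    (eq_zero_of_X_mul_sq_add_C_mul_sq_eq_sq
      (fun _ _ => MvPolynomial.eq_zero_of_X_mul_sq_eq_sq) he).2.2
  exact nonZeroDivisors.ne_zero hc ((map_eq_zero_iff e e.injective).mp hc₀)
end
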